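/- arXiv:1607.08806 — 2 statements merged into one kernel-verified Lean document; each statement's English description precedes it below -/
import Mathlib

section
/- In the reflected Gray code Γ_n, the first bitstring of weight k (0 ≤ k ≤ n) is 1^k 0^{n−k}, and for 0 < k ≤ n the last bitstring of weight k is 1^{k−1} 0^{n−k} 1. -/
/-- The reflected Gray code `Γ_n`. -/
def gray : ℕ → List (List Bool)
  | 0 => [[]]
  | n + 1 => (gray n).map (fun x => x ++ [false]) ++ ((gray n).reverse.map (fun x => x ++ [true]))

/-- `Γ_{n,k}`: the subsequence of `Γ_n` consisting of the bitstrings of weight `k`. -/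
def grayLevel (n k : ℕ) : List (List Bool) := (gray n).filter (fun x => x.count true = k)

/-! Appending a bit to every word of `Γ_n` commutes with selecting a weight, so `Γ_{n+1,k+1}` is
`Γ_{n,k+1}` with `0` appended followed by the reversal of `Γ_{n,k}` with `1` appended. By induction
the first word of `Γ_{n,k}` is `1^k 0^(n-k)` (for `k = n` use `Γ_{n,n} = (1^n)`), and the last word of
`Γ_{n+1,k+1}` is the first word of `Γ_{n,k}` followed by `1`. -/

theorem length_of_mem_gray {n : ℕ} {x : List Bool} (hx : x ∈ gray n) : x.length = n := by
  induction n generalizing x with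
  | zero => simp_all [gray]
  | succ n ih =>
    simp only [gray, List.mem_append, List.mem_map, List.mem_reverse] at hx
    rcases hx with ⟨y, hy, rfl⟩ | ⟨y, hy, rfl⟩ <;> simp [ih hy]

theorem grayLevel_eq_nil_of_lt {n k : ℕ} (h : n < k) : grayLevel n k = [] := by
  refine List.filter_eq_nil_iff.2 fun x hx => ?_
  have := (length_of_mem_gray hx).symm ▸ List.count_le_length (a := true) (l := x)
  simp only [decide_eq_true_eq]
  omega

theorem grayLevel_succ_zero (n : ℕ) :
    grayLevel (n + 1) 0 = (grayLevel n 0).map (· ++ [false]) := by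
  simp [grayLevel, gray, List.filter_append, List.filter_map, Function.comp_def,
    List.count_append]

theorem grayLevel_succ_succ (n k : ℕ) :
    grayLevel (n + 1) (k + 1) =
      (grayLevel n (k + 1)).map (· ++ [false]) ++ (grayLevel n k).reverse.map (· ++ [true]) := by
  simp [grayLevel, gray, List.filter_append, List.filter_map, List.filter_reverse,
    Function.comp_def, List.count_append]

theorem grayLevel_self (n : ℕ) : grayLevel n n = [List.replicate n true] := by
  induction n with
  | zero => rfl
  | succ n ih =>
    rw [grayLevel_succ_succ, grayLevel_eq_nil_of_lt n.lt_succ_self, ih]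
    simp [List.replicate_succ']

theorem head?_grayLevel {n k : ℕ} (hk : k ≤ n) :
    (grayLevel n k).head? = some (List.replicate k true ++ List.replicate (n - k) false) := by
  induction n generalizing k with
  | zero => simp [Nat.le_zero.1 hk, grayLevel, gray]
  | succ n ih =>
    rcases k with _ | k
    · simp [grayLevel_succ_zero, ih n.zero_le, List.replicate_succ']
    rcases Nat.lt_or_ge k n with hk | hk
    · have hne : grayLevel n (k + 1) ≠ [] := fun h => by simpa [h] using ih hk
      rw [grayLevel_succ_succ, List.head?_append_of_ne_nil _ (by simpa using hne), List.head?_map,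
        ih hk, show n + 1 - (k + 1) = n - (k + 1) + 1 by omega]
      simp [List.replicate_succ']
    · obtain rfl : k = n := by omega
      simp [grayLevel_self]

theorem getLast?_grayLevel_succ_succ {n k : ℕ} (hk : k ≤ n) :
    (grayLevel (n + 1) (k + 1)).getLast? =
      some (List.replicate k true ++ List.replicate (n - k) false ++ [true]) := by
  have hne : grayLevel n k ≠ [] := fun h => by simpa [h] using head?_grayLevel hk
  rw [grayLevel_succ_succ, List.getLast?_append_of_ne_nil _ (by simpa using hne),
    List.getLast?_map, List.getLast?_reverse, head?_grayLevel hk]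
  rfl

theorem stmt5_general (n k : ℕ) (hk : k ≤ n) :
    (grayLevel n k).head? = some (List.replicate k true ++ List.replicate (n - k) false)
    ∧ (0 < k → (grayLevel n k).getLast? =
        some (List.replicate (k - 1) true ++ List.replicate (n - k) false ++ [true])) := by
  refine ⟨head?_grayLevel hk, fun hk0 => ?_⟩
  obtain ⟨j, rfl⟩ := Nat.exists_eq_succ_of_ne_zero hk0.ne'
  obtain ⟨m, rfl⟩ := Nat.exists_eq_succ_of_ne_zero (by omega : n ≠ 0)
  simpa using getLast?_grayLevel_succ_succ (Nat.succ_le_succ_iff.1 hk)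

/-- In `Γ_n`, the first bitstring of weight `k` is `1^k 0^{n-k}`, and for `k > 0`
the last bitstring of weight `k` is `1^{k-1} 0^{n-k} 1`. -/
theorem stmt5 (n k : ℕ) (hn : 1 ≤ n) (hk : k ≤ n) :
    (grayLevel n k).head? = some (List.replicate k true ++ List.replicate (n - k) false)
    ∧ (0 < k → (grayLevel n k).getLast? =
        some (List.replicate (k - 1) true ++ List.replicate (n - k) false ++ [true])) :=
  stmt5_general n k hk
end

section
/- For any n ≥ 2 and 0 < k < n, the sequence up(Γ_{n,k}), consisting of the vertices up(x, s(x)) at level k+1 for each upward vertex x of Γ_{n,k} in the order induced by Γ_{n,k}, is a subsequence of Γ_{n,k+1}; in particular all its vertices are distinct. -/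
/-- `x` is an upward vertex of `Γ_n`: its cyclic successor in `Γ_n` has weight one more. -/
def IsUpward (n : ℕ) (x : List Bool) : Prop :=
  ∃ p : Fin (gray n).length, (gray n).get p = x ∧
    ((gray n).get ⟨((p : ℕ) + 1) % (gray n).length, Nat.mod_lt _ p.pos⟩).count true
      = x.count true + 1

instance (n : ℕ) (x : List Bool) : Decidable (IsUpward n x) := by
  unfold IsUpward; infer_instance

/-- The sequence `up(Γ_{n,k})`: for each upward vertex `x` of `Γ_{n,k}` in order, the
common upper neighbor `up(x, s(x))` (the bitwise OR of `x` and its cyclic successor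
`s(x)` in `Γ_{n,k}`). -/
def upSeq (n k : ℕ) : List (List Bool) :=
  (List.finRange (grayLevel n k).length).filterMap (fun a =>
    if IsUpward n ((grayLevel n k).get a) then
      some (List.zipWith (· || ·) ((grayLevel n k).get a)
        ((grayLevel n k).get ⟨((a : ℕ) + 1) % (grayLevel n k).length, Nat.mod_lt _ a.pos⟩))
    else none)

/-!
Write `Γ_{n+1} = Γ_n·0 ++ rev(Γ_n)·1` and `rev(Γ_{n+1}) = Γ_n·1 ++ rev(Γ_n)·0`. By induction on `n`,
in both `Γ_n` and `rev(Γ_n)` every upward step `x → y` at a level `k ≥ 1` is followed, before the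
next vertex `s(x)` of level `k`, by `up(x, s(x))`. Appending a constant bit shifts all levels
alike, so peaks inside a half come from the induction hypothesis (for the halves ending in `1`, at
level `k - 1`); the only peak across the seam is `0^{n-1}10 → 0^{n-1}11 → ⋯ → 0^n1`, at level `1`
(run backwards in `rev(Γ_{n+1})`). Hence the vertices `up(x, s(x))` appear in `Γ_{n,k+1}`
strictly between consecutive vertices of `Γ_{n,k}`, i.e. in the order of `up(Γ_{n,k})`.
-/

theorem List.filter_eq_map_getD_findIdxs {α : Type*} (xs : List α) (p : α → Bool) (d : α) :
    xs.filter p = (xs.findIdxs p).map (xs.getD · d) := by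
  refine List.ext_getElem (by simp [List.countP_eq_length_filter]) fun a h₁ h₂ => ?_
  rw [List.getElem_filter_eq_getElem_getElem_findIdxs, List.getElem_map, List.getD_eq_getElem]

theorem List.SortedLT.exists_getElem_succ_eq {I : List ℕ} (hI : I.SortedLT) {a j : ℕ}
    (ha : a < I.length) (hj : j ∈ I) (hlt : I[a] < j) (hnext : ∀ r ∈ I, I[a] < r → j ≤ r) :
    ∃ h : a + 1 < I.length, I[a + 1] = j := by
  obtain ⟨b, hb, rfl⟩ := List.getElem_of_mem hj
  have hab : a < b := by simpa [hI.getElem_lt_getElem_iff] using hlt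
  obtain rfl | hab' := (Nat.succ_le_of_lt hab).eq_or_lt
  · exact ⟨hb, rfl⟩
  · have hsucc : a + 1 < I.length := by omega
    have := hnext I[a + 1] (List.getElem_mem hsucc) (hI.getElem_lt_getElem_iff.mpr (by omega))
    exact absurd (hI.getElem_le_getElem_iff.mp this) (by omega)

namespace GrayCode

section Peaks

variable {L L₁ L₂ : List (List Bool)} {k i j m : ℕ}

def IsUpStep (L : List (List Bool)) (k i : ℕ) : Prop :=
  i + 1 < L.length ∧ (L.getD i []).count true = k ∧ (L.getD (i + 1) []).count true = k + 1

/-- `L[m] = up(L[i], L[j])` for consecutive vertices `L[i]`, `L[j]` of level `k` in `L`, and it lies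
between them. -/
structure IsPeak (L : List (List Bool)) (k i j m : ℕ) : Prop where
  lt_mid : i < m
  mid_lt : m < j
  lt_length : j < L.length
  count_left : (L.getD i []).count true = k
  count_right : (L.getD j []).count true = k
  count_ne_of_between : ∀ r, i < r → r < j → (L.getD r []).count true ≠ k
  getD_mid : L.getD m [] = List.zipWith (· || ·) (L.getD i []) (L.getD j [])
  count_mid : (L.getD m []).count true = k + 1

def UpClosed (L : List (List Bool)) (k : ℕ) : Prop :=
  ∀ i, IsUpStep L k i → ∃ j m, IsPeak L k i j m

lemma count_true_append_singleton (x : List Bool) (b : Bool) :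
    (x ++ [b]).count true = x.count true + b.toNat := by
  cases b <;> simp

lemma zipWith_or_append_singleton {x y : List Bool} (h : x.length = y.length) (b c : Bool) :
    List.zipWith (· || ·) (x ++ [b]) (y ++ [c]) = List.zipWith (· || ·) x y ++ [b || c] := by
  rw [List.zipWith_append h]
  rfl

lemma getD_map_append_singleton (b : Bool) (h : i < L.length) :
    (L.map (· ++ [b])).getD i [] = L.getD i [] ++ [b] := by
  rw [List.getD_eq_getElem _ _ (by simpa using h), List.getElem_map, List.getD_eq_getElem _ _ h]

lemma IsPeak.map_append_singleton {n : ℕ} (hL : ∀ x ∈ L, x.length = n) (h : IsPeak L k i j m)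
    (b : Bool) : IsPeak (L.map (· ++ [b])) (k + b.toNat) i j m := by
  have := h.lt_mid; have := h.mid_lt; have := h.lt_length
  have getD_eq : ∀ r ≤ j, (L.map (· ++ [b])).getD r [] = L.getD r [] ++ [b] :=
    fun r hr => getD_map_append_singleton b (by omega)
  have length_eq : ∀ r ≤ j, (L.getD r []).length = n := fun r hr => by
    rw [List.getD_eq_getElem _ _ (by omega)]
    exact hL _ (List.getElem_mem _)
  refine ⟨h.lt_mid, h.mid_lt, by simpa using h.lt_length, ?_, ?_, fun r hir hrj => ?_, ?_, ?_⟩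
  · rw [getD_eq i (by omega), count_true_append_singleton, h.count_left]
  · rw [getD_eq j le_rfl, count_true_append_singleton, h.count_right]
  · rw [getD_eq r hrj.le, count_true_append_singleton]
    simpa using h.count_ne_of_between r hir hrj
  · rw [getD_eq m (by omega), getD_eq i (by omega), getD_eq j le_rfl,
      zipWith_or_append_singleton ((length_eq i (by omega)).trans (length_eq j le_rfl).symm),
      Bool.or_self, h.getD_mid]
  · rw [getD_eq m (by omega), count_true_append_singleton, h.count_mid, add_right_comm]

lemma IsUpStep.of_map_append_singleton {b : Bool}
    (h : IsUpStep (L.map (· ++ [b])) (k + b.toNat) i) : IsUpStep L k i := by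
  obtain ⟨hi, hleft, hright⟩ := h
  rw [List.length_map] at hi
  rw [getD_map_append_singleton b (by omega), count_true_append_singleton] at hleft
  rw [getD_map_append_singleton b hi, count_true_append_singleton] at hright
  exact ⟨hi, by omega, by omega⟩

lemma UpClosed.map_append_singleton {n : ℕ} (hL : ∀ x ∈ L, x.length = n) (h : UpClosed L k)
    (b : Bool) : UpClosed (L.map (· ++ [b])) (k + b.toNat) := fun i hi => by
  obtain ⟨j, m, hpeak⟩ := h i hi.of_map_append_singleton
  exact ⟨j, m, hpeak.map_append_singleton hL b⟩

lemma IsPeak.append_left (h : IsPeak L₁ k i j m) : IsPeak (L₁ ++ L₂) k i j m := by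
  have := h.lt_mid; have := h.mid_lt; have := h.lt_length
  have getD_eq : ∀ r ≤ j, (L₁ ++ L₂).getD r [] = L₁.getD r [] :=
    fun r hr => List.getD_append _ _ _ _ (by omega)
  refine ⟨h.lt_mid, h.mid_lt, by simp; omega, ?_, ?_, fun r hir hrj => ?_, ?_, ?_⟩
  · rw [getD_eq i (by omega)]; exact h.count_left
  · rw [getD_eq j le_rfl]; exact h.count_right
  · rw [getD_eq r hrj.le]; exact h.count_ne_of_between r hir hrj
  · rw [getD_eq m (by omega), getD_eq i (by omega), getD_eq j le_rfl]; exact h.getD_mid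
  · rw [getD_eq m (by omega)]; exact h.count_mid

lemma getD_append_length_add (r : ℕ) : (L₁ ++ L₂).getD (L₁.length + r) [] = L₂.getD r [] := by
  rw [List.getD_append_right _ _ _ _ (by omega), Nat.add_sub_cancel_left]

lemma IsPeak.append_right (h : IsPeak L₂ k i j m) :
    IsPeak (L₁ ++ L₂) k (L₁.length + i) (L₁.length + j) (L₁.length + m) := by
  refine ⟨by have := h.lt_mid; omega, by have := h.mid_lt; omega,
    by have := h.lt_length; simp; omega, ?_, ?_, fun r hir hrj => ?_, ?_, ?_⟩
  · rw [getD_append_length_add]; exact h.count_left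
  · rw [getD_append_length_add]; exact h.count_right
  · obtain ⟨r, rfl⟩ : ∃ s, r = L₁.length + s := ⟨r - L₁.length, by omega⟩
    rw [getD_append_length_add]
    exact h.count_ne_of_between _ (by omega) (by omega)
  · simpa only [getD_append_length_add] using h.getD_mid
  · rw [getD_append_length_add]; exact h.count_mid

lemma IsUpStep.of_append_left (h : IsUpStep (L₁ ++ L₂) k i) (hi : i + 1 < L₁.length) :
    IsUpStep L₁ k i := by
  obtain ⟨-, hleft, hright⟩ := h
  rw [List.getD_append _ _ _ _ (by omega)] at hleft
  rw [List.getD_append _ _ _ _ hi] at hright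
  exact ⟨hi, hleft, hright⟩

lemma IsUpStep.of_append_right (h : IsUpStep (L₁ ++ L₂) k (L₁.length + i)) : IsUpStep L₂ k i := by
  obtain ⟨hi, hleft, hright⟩ := h
  rw [getD_append_length_add] at hleft
  rw [add_assoc, getD_append_length_add] at hright
  exact ⟨by simp at hi; omega, hleft, hright⟩

lemma UpClosed.append
    (h₁ : ∀ i < L₁.length, IsUpStep (L₁ ++ L₂) k i → ∃ j m, IsPeak (L₁ ++ L₂) k i j m)
    (h₂ : UpClosed L₂ k) : UpClosed (L₁ ++ L₂) k := by
  intro i hi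
  by_cases hlt : i < L₁.length
  · exact h₁ i hlt hi
  · obtain ⟨r, rfl⟩ := Nat.exists_eq_add_of_le (not_lt.mp hlt)
    obtain ⟨j, m, hpeak⟩ := h₂ r hi.of_append_right
    exact ⟨_, _, hpeak.append_right⟩

lemma IsPeak.reverse (h : IsPeak L k i j m) :
    IsPeak L.reverse k (L.length - 1 - j) (L.length - 1 - i) (L.length - 1 - m) := by
  have := h.lt_mid; have := h.mid_lt; have := h.lt_length
  have getD_eq : ∀ r ≤ j, L.reverse.getD (L.length - 1 - r) [] = L.getD r [] := fun r hr => by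
    rw [List.getD_reverse _ (by omega)]
    congr 1
    omega
  refine ⟨by omega, by omega, by simp; omega, ?_, ?_, fun r hir hrj => ?_, ?_, ?_⟩
  · rw [getD_eq j le_rfl]; exact h.count_right
  · rw [getD_eq i (by omega)]; exact h.count_left
  · have hr : r = L.length - 1 - (L.length - 1 - r) := by omega
    rw [hr, getD_eq _ (by omega)]
    exact h.count_ne_of_between _ (by omega) (by omega)
  · rw [getD_eq m (by omega), getD_eq i (by omega), getD_eq j le_rfl, h.getD_mid]
    exact List.zipWith_comm_of_comm Bool.or_comm
  · rw [getD_eq m (by omega)]; exact h.count_mid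

end Peaks

section Gray

lemma length_gray (n : ℕ) : (gray n).length = 2 ^ n := by
  induction n with
  | zero => rfl
  | succ n ih => simp [gray, ih, pow_succ, mul_two]

lemma length_of_mem_gray {n : ℕ} {x : List Bool} (h : x ∈ gray n) : x.length = n := by
  induction n generalizing x with
  | zero => simp_all [gray]
  | succ n ih =>
    simp only [gray, List.mem_append, List.mem_map, List.mem_reverse] at h
    rcases h with ⟨y, hy, rfl⟩ | ⟨y, hy, rfl⟩ <;> simp [ih hy]

lemma nodup_gray (n : ℕ) : (gray n).Nodup := by
  induction n with
  | zero => simp [gray]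
  | succ n ih =>
    refine List.Nodup.append (ih.map fun _ _ => by simp)
      ((List.nodup_reverse.mpr ih).map fun _ _ => by simp) ?_
    simp only [List.disjoint_left, List.mem_map, List.mem_reverse]
    rintro _ ⟨x, -, rfl⟩ ⟨y, -, h⟩
    simpa using congrArg List.getLast? h

lemma reverse_gray_succ (n : ℕ) :
    (gray (n + 1)).reverse =
      (gray n).map (· ++ [true]) ++ (gray n).reverse.map (· ++ [false]) := by
  simp [gray, List.map_reverse]

lemma getD_gray_succ_of_lt {n i : ℕ} (h : i < 2 ^ n) :
    (gray (n + 1)).getD i [] = (gray n).getD i [] ++ [false] := by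
  rw [gray, List.getD_append _ _ _ _ (by simpa [length_gray] using h),
    getD_map_append_singleton _ (by rwa [length_gray])]

lemma getD_gray_succ_two_pow_add {n q : ℕ} (h : q < 2 ^ n) :
    (gray (n + 1)).getD (2 ^ n + q) [] = (gray n).getD (2 ^ n - 1 - q) [] ++ [true] := by
  have hA : ((gray n).map (· ++ [false])).length = 2 ^ n := by simp [length_gray]
  rw [gray, ← hA, getD_append_length_add, getD_map_append_singleton _ (by simpa [length_gray]),
    List.getD_reverse _ (by rwa [length_gray]), hA, length_gray]

lemma getD_gray_zero (n : ℕ) : (gray n).getD 0 [] = List.replicate n false := by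
  induction n with
  | zero => rfl
  | succ n ih => rw [getD_gray_succ_of_lt (Nat.two_pow_pos n), ih, List.replicate_succ']

lemma getD_gray_succ_last (n : ℕ) :
    (gray (n + 1)).getD (2 ^ (n + 1) - 1) [] = List.replicate n false ++ [true] := by
  have h := getD_gray_succ_two_pow_add (Nat.sub_one_lt (Nat.two_pow_pos n).ne')
  rwa [Nat.sub_self, getD_gray_zero, ← Nat.add_sub_assoc Nat.one_le_two_pow, ← two_mul,
    ← pow_succ'] at h

lemma count_true_getD_gray_eq_zero_iff {n i : ℕ} (hi : i < 2 ^ n) :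
    ((gray n).getD i []).count true = 0 ↔ i = 0 := by
  refine ⟨fun h => ?_, by rintro rfl; rw [getD_gray_zero, List.count_replicate]; rfl⟩
  rw [← length_gray] at hi
  rw [List.getD_eq_getElem _ _ hi] at h
  have h0 : (gray n)[0] = List.replicate n false := by
    rw [← getD_gray_zero, List.getD_eq_getElem]
  have hx : (gray n)[i] = List.replicate n false :=
    List.eq_replicate_iff.mpr ⟨length_of_mem_gray (List.getElem_mem hi), fun b hb =>
      Bool.eq_false_iff.mpr fun hb' => List.count_eq_zero.mp h (hb' ▸ hb)⟩
  exact (nodup_gray n).getElem_inj_iff.mp (hx.trans h0.symm)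

lemma isPeak_gray_succ {n : ℕ} (hn : 1 ≤ n) :
    IsPeak (gray (n + 1)) 1 (2 ^ n - 1) (2 ^ (n + 1) - 1) (2 ^ n) := by
  obtain ⟨n, rfl⟩ := Nat.exists_eq_add_of_le' hn
  have h2 : 2 ≤ 2 ^ (n + 1) := Nat.le_self_pow (by omega) 2
  have hpow : 2 ^ (n + 1 + 1) = 2 ^ (n + 1) + 2 ^ (n + 1) := by rw [pow_succ, mul_two]
  have hleft : (gray (n + 1 + 1)).getD (2 ^ (n + 1) - 1) [] =
      List.replicate n false ++ [true] ++ [false] := by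
    rw [getD_gray_succ_of_lt (by omega), getD_gray_succ_last]
  have hmid : (gray (n + 1 + 1)).getD (2 ^ (n + 1)) [] =
      List.replicate n false ++ [true] ++ [true] := by
    rw [← add_zero (2 ^ (n + 1)), getD_gray_succ_two_pow_add (by omega), Nat.sub_zero,
      getD_gray_succ_last]
  refine ⟨by omega, by omega, by rw [length_gray]; omega,
    by rw [hleft]; simp [List.count_replicate], by rw [getD_gray_succ_last]; simp [List.count_replicate],
    fun r hlr hrr => ?_, ?_, by rw [hmid]; simp [List.count_replicate]⟩
  · obtain ⟨q, rfl⟩ : ∃ q, r = 2 ^ (n + 1) + q := ⟨r - 2 ^ (n + 1), by omega⟩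
    rw [getD_gray_succ_two_pow_add (by omega), count_true_append_singleton, Bool.toNat_true,
      Ne, add_eq_right, count_true_getD_gray_eq_zero_iff (by omega)]
    omega
  · rw [hleft, hmid, getD_gray_succ_last, List.replicate_succ',
      zipWith_or_append_singleton (by simp), zipWith_or_append_singleton (by simp)]
    simp

lemma upClosed_reverse_gray_zero (n : ℕ) : UpClosed (gray n).reverse 0 := by
  rintro i ⟨hi, hzero, -⟩
  rw [List.length_reverse, length_gray] at hi
  rw [List.getD_reverse _ (by rw [length_gray]; omega), length_gray,
    count_true_getD_gray_eq_zero_iff (by omega)] at hzero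
  omega

lemma not_isUpStep_reverse_gray_succ_seam (n k : ℕ) :
    ¬IsUpStep (gray (n + 1)).reverse k (2 ^ n - 1) := by
  rintro ⟨-, hleft, hright⟩
  have := Nat.two_pow_pos n
  rw [List.getD_reverse _ (by rw [length_gray, pow_succ]; omega), length_gray] at hleft hright
  rw [show 2 ^ (n + 1) - 1 - (2 ^ n - 1) = 2 ^ n + 0 by rw [pow_succ]; omega,
    getD_gray_succ_two_pow_add (by omega), count_true_append_singleton] at hleft
  rw [show 2 ^ (n + 1) - 1 - (2 ^ n - 1 + 1) = 2 ^ n - 1 - 0 by rw [pow_succ]; omega,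
    getD_gray_succ_of_lt (by omega), count_true_append_singleton] at hright
  simp only [Bool.toNat_true, Bool.toNat_false] at hleft hright
  omega

lemma length_map_append_singleton_gray (n : ℕ) (b : Bool) :
    ((gray n).map (· ++ [b])).length = 2 ^ n := by
  rw [List.length_map, length_gray]

lemma upClosed_gray_succ {n k : ℕ} (h₀ : UpClosed (gray n) (k + 1))
    (h₁ : UpClosed (gray n).reverse k) : UpClosed (gray (n + 1)) (k + 1) := by
  refine UpClosed.append (fun i hi hstep => ?_)
    (h₁.map_append_singleton (fun _ hx => length_of_mem_gray (List.mem_reverse.mp hx)) true)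
  rw [length_map_append_singleton_gray] at hi
  by_cases hi' : i + 1 < 2 ^ n
  · obtain ⟨j, m, hpeak⟩ := h₀.map_append_singleton (fun _ => length_of_mem_gray) false i
      (hstep.of_append_left (by rwa [length_map_append_singleton_gray]))
    exact ⟨j, m, hpeak.append_left⟩
  · obtain rfl : i = 2 ^ n - 1 := by omega
    obtain ⟨-, hleft, -⟩ := hstep
    rw [← gray, getD_gray_succ_of_lt hi, count_true_append_singleton] at hleft
    rcases n with _ | n
    · simp [gray] at hleft
    · rw [getD_gray_succ_last] at hleft
      obtain rfl : k = 0 := by simpa [List.count_replicate] using hleft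
      exact ⟨_, _, isPeak_gray_succ (by omega)⟩

lemma upClosed_reverse_gray_succ {n k : ℕ} (h₀ : 1 ≤ k → UpClosed (gray n) k)
    (h₁ : UpClosed (gray n).reverse (k + 1)) : UpClosed (gray (n + 1)).reverse (k + 1) := by
  rw [reverse_gray_succ]
  refine UpClosed.append (fun i hi hstep => ?_)
    (h₁.map_append_singleton (fun _ hx => length_of_mem_gray (List.mem_reverse.mp hx)) false)
  rw [length_map_append_singleton_gray] at hi
  by_cases hi' : i + 1 < 2 ^ n
  · have hstep' := hstep.of_append_left (by rwa [length_map_append_singleton_gray])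
    rcases Nat.eq_zero_or_pos k with rfl | hk
    · obtain rfl : i = 0 :=
        (count_true_getD_gray_eq_zero_iff hi).mp hstep'.of_map_append_singleton.2.1
      have hn : 1 ≤ n := Nat.pos_of_ne_zero (by rintro rfl; simp at hi')
      rw [← reverse_gray_succ]
      -- the mirror image of the peak at the seam of `Γ_{n+1}`
      refine ⟨2 ^ n, 2 ^ n - 1, ?_⟩
      convert (isPeak_gray_succ hn).reverse using 1 <;> rw [length_gray, pow_succ] <;> omega
    · obtain ⟨j, m, hpeak⟩ :=
        (h₀ hk).map_append_singleton (fun _ => length_of_mem_gray) true i hstep'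
      exact ⟨j, m, hpeak.append_left⟩
  · obtain rfl : i = 2 ^ n - 1 := by omega
    rw [← reverse_gray_succ] at hstep
    exact absurd hstep (not_isUpStep_reverse_gray_succ_seam n _)

theorem upClosed_gray (n : ℕ) {k : ℕ} (hk : 1 ≤ k) :
    UpClosed (gray n) k ∧ UpClosed (gray n).reverse k := by
  induction n generalizing k with
  | zero => constructor <;> rintro i ⟨hi, -, -⟩ <;> simp [gray] at hi
  | succ n ih =>
    obtain ⟨k, rfl⟩ := Nat.exists_eq_add_of_le' hk
    have hrev : UpClosed (gray n).reverse k := by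
      rcases k with _ | k
      · exact upClosed_reverse_gray_zero n
      · exact (ih (by omega)).2
    exact ⟨upClosed_gray_succ (ih hk).1 hrev,
      upClosed_reverse_gray_succ (fun hk' => (ih hk').1) (ih hk).2⟩

lemma isUpStep_of_isUpward {n i : ℕ} (hi : i < (gray n).length)
    (hup : IsUpward n ((gray n).getD i [])) :
    IsUpStep (gray n) (((gray n).getD i []).count true) i := by
  obtain ⟨⟨p, hp⟩, hpi, hnext⟩ := hup
  simp only [List.get_eq_getElem, List.getD_eq_getElem _ _ hi] at hpi hnext
  obtain rfl : i = p := ((nodup_gray n).getElem_inj_iff.mp hpi).symm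
  by_cases hwrap : i + 1 < (gray n).length
  · simp only [Nat.mod_eq_of_lt hwrap] at hnext
    exact ⟨hwrap, rfl, by rwa [List.getD_eq_getElem _ _ hwrap, List.getD_eq_getElem _ _ hi]⟩
  · have h0 : (gray n)[0]'(by omega) = List.replicate n false := by
      rw [← List.getD_eq_getElem _ [], getD_gray_zero]
    simp only [show (i + 1) % (gray n).length = 0 by rw [show i + 1 = (gray n).length by omega,
      Nat.mod_self], h0] at hnext
    simp [List.count_replicate] at hnext

end Gray

section Level

def levelIndices (n k : ℕ) : List ℕ := (gray n).findIdxs (fun x => x.count true = k)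

variable {n k a : ℕ}

lemma grayLevel_eq_map_levelIndices (n k : ℕ) :
    grayLevel n k = (levelIndices n k).map ((gray n).getD · []) :=
  List.filter_eq_map_getD_findIdxs _ _ _

lemma sortedLT_levelIndices (n k : ℕ) : (levelIndices n k).SortedLT :=
  List.pairwise_findIdxs.sortedLT

lemma mem_levelIndices {i : ℕ} :
    i ∈ levelIndices n k ↔ i < (gray n).length ∧ ((gray n).getD i []).count true = k := by
  simp only [levelIndices, List.mem_findIdxs_iff_exists_getElem_pos, decide_eq_true_eq]
  exact ⟨fun ⟨h, hc⟩ => ⟨h, by rwa [List.getD_eq_getElem _ _ h]⟩,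
    fun ⟨h, hc⟩ => ⟨h, by rwa [List.getD_eq_getElem _ _ h] at hc⟩⟩

lemma length_levelIndices : (levelIndices n k).length = (grayLevel n k).length := by
  rw [grayLevel_eq_map_levelIndices, List.length_map]

lemma getD_grayLevel (ha : a < (grayLevel n k).length) :
    (grayLevel n k).getD a [] = (gray n).getD ((levelIndices n k).getD a 0) [] := by
  rw [grayLevel_eq_map_levelIndices] at ha ⊢
  rw [List.getD_eq_getElem _ _ ha, List.getElem_map,
    List.getD_eq_getElem (levelIndices n k) 0 (by simpa using ha)]

lemma getD_levelIndices_le_getD {b : ℕ} (hab : a ≤ b) (hb : b < (grayLevel n k).length) :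
    (levelIndices n k).getD a 0 ≤ (levelIndices n k).getD b 0 := by
  rw [← length_levelIndices] at hb
  rw [List.getD_eq_getElem _ _ (by omega), List.getD_eq_getElem _ _ hb]
  exact (sortedLT_levelIndices n k).getElem_le_getElem_iff.mpr hab

/-- `(gray n)[m] = up(x, s(x))` for the `a`-th vertex `x` of `Γ_{n,k}`, with no wrap-around. -/
def IsLevelPeak (n k a m : ℕ) : Prop :=
  a + 1 < (grayLevel n k).length ∧
    IsPeak (gray n) k ((levelIndices n k).getD a 0) ((levelIndices n k).getD (a + 1) 0) m

theorem exists_isLevelPeak_of_isUpward (hk : 1 ≤ k) (ha : a < (grayLevel n k).length)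
    (hup : IsUpward n ((grayLevel n k).getD a [])) : ∃ m, IsLevelPeak n k a m := by
  set I := levelIndices n k
  have haI : a < I.length := by rwa [length_levelIndices]
  obtain ⟨hi, hcount⟩ := mem_levelIndices.mp (List.getElem_mem haI)
  rw [getD_grayLevel ha, List.getD_eq_getElem _ _ haI] at hup
  have hstep := isUpStep_of_isUpward hi hup
  rw [hcount] at hstep
  obtain ⟨j, m, hpeak⟩ := (upClosed_gray n hk).1 _ hstep
  obtain ⟨ha', hj⟩ := (sortedLT_levelIndices n k).exists_getElem_succ_eq haI
    (mem_levelIndices.mpr ⟨hpeak.lt_length, hpeak.count_right⟩) (hpeak.lt_mid.trans hpeak.mid_lt)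
    fun r hr hir => not_lt.mp fun hrj =>
      hpeak.count_ne_of_between r hir hrj (mem_levelIndices.mp hr).2
  refine ⟨m, by rwa [← length_levelIndices], ?_⟩
  rwa [List.getD_eq_getElem _ _ haI, List.getD_eq_getElem _ _ ha', hj]

lemma IsLevelPeak.getD_gray (h : IsLevelPeak n k a m) :
    (gray n).getD m [] =
      List.zipWith (· || ·) ((grayLevel n k).getD a []) ((grayLevel n k).getD (a + 1) []) := by
  rw [h.2.getD_mid, getD_grayLevel (by have := h.1; omega), getD_grayLevel h.1]

lemma IsLevelPeak.mem_levelIndices_succ (h : IsLevelPeak n k a m) : m ∈ levelIndices n (k + 1) :=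
  mem_levelIndices.mpr ⟨h.2.mid_lt.trans h.2.lt_length, h.2.count_mid⟩

lemma IsLevelPeak.lt {b m' : ℕ} (h : IsLevelPeak n k a m) (h' : IsLevelPeak n k b m')
    (hab : a < b) : m < m' :=
  calc m < (levelIndices n k).getD (a + 1) 0 := h.2.mid_lt
    _ ≤ (levelIndices n k).getD b 0 := getD_levelIndices_le_getD hab (by have := h'.1; omega)
    _ < m' := h'.2.lt_mid

theorem upSeq_sublist_grayLevel (hk : 1 ≤ k) : (upSeq n k).Sublist (grayLevel n (k + 1)) := by
  have key : ∀ a : Fin (grayLevel n k).length,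
      ∃ m, IsUpward n ((grayLevel n k).get a) → IsLevelPeak n k a m := fun a => by
    by_cases h : IsUpward n ((grayLevel n k).get a)
    · obtain ⟨m, hm⟩ := exists_isLevelPeak_of_isUpward hk a.isLt (by rwa [List.getD_eq_get])
      exact ⟨m, fun _ => hm⟩
    · exact ⟨0, fun h' => absurd h' h⟩
  choose M hM using key
  set idx := (List.finRange (grayLevel n k).length).filterMap
    fun a => if IsUpward n ((grayLevel n k).get a) then some (M a) else none
  have hupSeq : upSeq n k = idx.map ((gray n).getD · []) := by
    rw [upSeq, List.map_filterMap]
    congr 1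
    funext a
    split_ifs with h
    · have hsucc : (grayLevel n k).get ⟨(a + 1) % (grayLevel n k).length, Nat.mod_lt _ a.pos⟩ =
          (grayLevel n k).getD (a + 1) [] := by
        simp only [List.get_eq_getElem, Nat.mod_eq_of_lt (hM a h).1,
          List.getD_eq_getElem _ _ (hM a h).1]
      rw [Option.map_some, (hM a h).getD_gray, hsucc, List.getD_eq_get]
    · rfl
  have hsorted : idx.Pairwise (· < ·) := by
    refine (List.pairwise_lt_finRange _).filterMap _ fun a b hab x hx y hy => ?_
    simp only [Option.ite_none_right_eq_some, Option.some.injEq] at hx hy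
    obtain ⟨ha, rfl⟩ := hx
    obtain ⟨hb, rfl⟩ := hy
    exact (hM a ha).lt (hM b hb) hab
  have hsubset : idx ⊆ levelIndices n (k + 1) := by
    intro x hx
    obtain ⟨a, -, hax⟩ := List.mem_filterMap.mp hx
    simp only [Option.ite_none_right_eq_some, Option.some.injEq] at hax
    obtain ⟨ha, rfl⟩ := hax
    exact (hM a ha).mem_levelIndices_succ
  rw [hupSeq, grayLevel_eq_map_levelIndices]
  exact (List.sublist_of_subperm_of_pairwise (List.subperm_of_subset hsorted.nodup hsubset)
    hsorted (sortedLT_levelIndices n (k + 1)).pairwise).map _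

end Level

end GrayCode

theorem stmt10_general (n k : ℕ) (hk0 : 0 < k) :
    (upSeq n k).Sublist (grayLevel n (k + 1)) ∧ (upSeq n k).Nodup := by
  have hsub := GrayCode.upSeq_sublist_grayLevel (n := n) hk0
  exact ⟨hsub, ((GrayCode.nodup_gray n).filter _).sublist hsub⟩

/-- For `n ≥ 2` and `0 < k < n`, the sequence `up(Γ_{n,k})` is a subsequence of
`Γ_{n,k+1}`; in particular all its vertices are distinct. -/
theorem stmt10 (n k : ℕ) (hn : 2 ≤ n) (hk0 : 0 < k) (hkn : k < n) :
    (upSeq n k).Sublist (grayLevel n (k + 1)) ∧ (upSeq n k).Nodup :=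
  stmt10_general n k hk0
end
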